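/- arXiv:1403.5652 — 2 statements merged into one kernel-verified Lean document; each statement's English description precedes it below -/
import Mathlib

section
/- Let n = 2k+1 be odd with k ≥ 1. Let A₁, A₂, A₃ be affinely independent points in ℝ². Divide each side of the triangle into n equal parts, and draw the cevians from each vertex to the k-th and (k+1)-th division points of the opposite side. The central hexagon formed by these six cevians has area 8/(9n² − 1) times the area of the triangle (Morgan's theorem). -/
def detv (u v : ℝ × ℝ) : ℝ := u.1 * v.2 - u.2 * v.1

noncomputable def area3 (P Q R : ℝ × ℝ) : ℝ := |detv (Q - P) (R - P)| / 2

def lineTh (P Q : ℝ × ℝ) : Set (ℝ × ℝ) := {X | ∃ t : ℝ, X = P + t • (Q - P)}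

/-- The j-th of the n equal division points of the segment PQ. -/
noncomputable def divpt (n j : ℕ) (P Q : ℝ × ℝ) : ℝ × ℝ :=
  (((n : ℝ) - j) / n) • P + ((j : ℝ) / n) • Q

/-!
In homogeneous barycentric coordinates with respect to `A1 A2 A3`, the two middle division
points of `A2A3` are `(0 : k+1 : k)` and `(0 : k : k+1)`, and cyclically for the other sides, so
the six vertices of the hexagon are `I = (k : k+1 : k)`, `J = (k : k+1 : k+1)` and their cyclic
shifts. The area of a triangle whose vertices have normalized barycentric coordinates is the
absolute value of their 3×3 determinant times the area of `A1A2A3`; fanning the hexagon from `I`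
gives determinants `k, 2k+1, 2k+1, k` over `(3k+1)²(3k+2)`, in total
`2 / ((3k+1)(3k+2)) = 8 / (9n² - 1)`.
-/

@[simp]
lemma detv_smul_left (c : ℝ) (u v : ℝ × ℝ) : detv (c • u) v = c * detv u v := by
  simp only [detv, Prod.smul_fst, Prod.smul_snd, smul_eq_mul]; ring

@[simp]
lemma detv_smul_right (c : ℝ) (u v : ℝ × ℝ) : detv u (c • v) = c * detv u v := by
  simp only [detv, Prod.smul_fst, Prod.smul_snd, smul_eq_mul]; ring

@[simp]
lemma detv_self (u : ℝ × ℝ) : detv u u = 0 := by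
  simp only [detv]; ring

lemma detv_rotate (P Q R : ℝ × ℝ) : detv (R - Q) (P - Q) = detv (Q - P) (R - P) := by
  simp only [detv, Prod.fst_sub, Prod.snd_sub]; ring

lemma eq_of_mem_lineTh_inter {P Q R S G X : ℝ × ℝ}
    (hG : G ∈ lineTh P Q ∩ lineTh R S) (hX : X ∈ lineTh P Q ∩ lineTh R S)
    (hPR : detv (P - G) (R - G) ≠ 0) : X = G := by
  obtain ⟨⟨u, hu⟩, v, hv⟩ := hG
  obtain ⟨⟨t, rfl⟩, s, hs⟩ := hX
  have hPG : P - G = (-u) • (Q - P) := by rw [hu]; module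
  have hRG : R - G = (-v) • (S - R) := by rw [hv]; module
  have hXG : (t - u) • (Q - P) = (s - v) • (S - R) := by
    linear_combination (norm := module) hs + hu - hv
  have hpar : (t - u) * detv (Q - P) (S - R) = 0 := by
    simpa using congrArg (detv · (S - R)) hXG
  rw [hPG, hRG, detv_smul_left, detv_smul_right] at hPR
  have htu : t = u := by
    have : detv (Q - P) (S - R) ≠ 0 := right_ne_zero_of_mul (right_ne_zero_of_mul hPR)
    linarith [(mul_eq_zero.mp hpar).resolve_right this]
  rw [htu, hu]

/-- The point with homogeneous barycentric coordinates `(a : b : c)` in the triangle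
`A₁A₂A₃` (a junk value when `a + b + c = 0`). -/
noncomputable def bary (A₁ A₂ A₃ : ℝ × ℝ) (a b c : ℝ) : ℝ × ℝ :=
  (a + b + c)⁻¹ • (a • A₁ + b • A₂ + c • A₃)

section Bary

variable (A₁ A₂ A₃ : ℝ × ℝ)

lemma bary_rotate (a b c : ℝ) : bary A₂ A₃ A₁ b c a = bary A₁ A₂ A₃ a b c := by
  rw [bary, bary, show b + c + a = a + b + c by ring,
    show b • A₂ + c • A₃ + a • A₁ = a • A₁ + b • A₂ + c • A₃ by abel]

lemma bary_one_zero_zero : bary A₁ A₂ A₃ 1 0 0 = A₁ := by simp [bary]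
lemma bary_zero_zero_one : bary A₁ A₂ A₃ 0 0 1 = A₃ := by simp [bary]

lemma divpt_eq_bary {n : ℕ} (hn : n ≠ 0) (j : ℕ) :
    divpt n j A₁ A₂ = bary A₁ A₂ A₃ ((n : ℝ) - j) j 0 := by
  have : (n : ℝ) ≠ 0 := by exact_mod_cast hn
  simp only [divpt, bary]
  rw [show (n : ℝ) - j + j + 0 = n by ring, smul_add, smul_add, smul_smul, smul_smul]
  simp [div_eq_inv_mul]

lemma detv_bary_sub {a₁ b₁ c₁ a₂ b₂ c₂ a₃ b₃ c₃ : ℝ} (h₁ : a₁ + b₁ + c₁ ≠ 0)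
    (h₂ : a₂ + b₂ + c₂ ≠ 0) (h₃ : a₃ + b₃ + c₃ ≠ 0) :
    detv (bary A₁ A₂ A₃ a₂ b₂ c₂ - bary A₁ A₂ A₃ a₁ b₁ c₁)
        (bary A₁ A₂ A₃ a₃ b₃ c₃ - bary A₁ A₂ A₃ a₁ b₁ c₁) =
      !![a₁, b₁, c₁; a₂, b₂, c₂; a₃, b₃, c₃].det /
        ((a₁ + b₁ + c₁) * (a₂ + b₂ + c₂) * (a₃ + b₃ + c₃)) * detv (A₂ - A₁) (A₃ - A₁) := by
  simp only [Matrix.det_fin_three, Matrix.of_apply, Matrix.cons_val', Matrix.cons_val_zero,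
    Matrix.cons_val_fin_one, Matrix.cons_val_one, Matrix.cons_val]
  simp only [bary, detv, Prod.fst_sub, Prod.snd_sub, Prod.fst_add, Prod.snd_add, Prod.smul_fst,
    Prod.smul_snd, smul_eq_mul]
  field_simp
  ring

lemma area3_bary {a₁ b₁ c₁ a₂ b₂ c₂ a₃ b₃ c₃ : ℝ} (h₁ : a₁ + b₁ + c₁ ≠ 0)
    (h₂ : a₂ + b₂ + c₂ ≠ 0) (h₃ : a₃ + b₃ + c₃ ≠ 0) :
    area3 (bary A₁ A₂ A₃ a₁ b₁ c₁) (bary A₁ A₂ A₃ a₂ b₂ c₂) (bary A₁ A₂ A₃ a₃ b₃ c₃) =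
      |!![a₁, b₁, c₁; a₂, b₂, c₂; a₃, b₃, c₃].det /
        ((a₁ + b₁ + c₁) * (a₂ + b₂ + c₂) * (a₃ + b₃ + c₃))| * area3 A₁ A₂ A₃ := by
  rw [area3, area3, detv_bary_sub A₁ A₂ A₃ h₁ h₂ h₃, abs_mul, mul_div_assoc]

lemma bary_mem_lineTh_bary_zero (a b c : ℝ) (hbc : b + c ≠ 0) (habc : a + b + c ≠ 0) :
    bary A₁ A₂ A₃ a b c ∈ lineTh A₁ (bary A₁ A₂ A₃ 0 b c) := by
  refine ⟨(b + c) / (a + b + c), ?_⟩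
  ext <;> simp only [bary, zero_add, zero_smul, Prod.fst_add, Prod.snd_add, Prod.fst_sub,
    Prod.snd_sub, Prod.smul_fst, Prod.smul_snd, smul_eq_mul] <;> field_simp <;> ring

lemma eq_bary_of_mem_cevians {a b c : ℝ} {X : ℝ × ℝ} (hD : detv (A₂ - A₁) (A₃ - A₁) ≠ 0)
    (ha : 0 ≤ a) (hb : 0 < b) (hc : 0 ≤ c)
    (hX : X ∈ lineTh A₁ (bary A₁ A₂ A₃ 0 b c) ∩ lineTh A₃ (bary A₁ A₂ A₃ a b 0)) :
    X = bary A₁ A₂ A₃ a b c := by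
  have hs : a + b + c ≠ 0 := by positivity
  refine eq_of_mem_lineTh_inter ⟨bary_mem_lineTh_bary_zero A₁ A₂ A₃ a b c (by positivity) hs,
    ?_⟩ hX ?_
  · rw [bary_rotate A₃ A₁ A₂ c a b, bary_rotate A₃ A₁ A₂ 0 a b]
    exact bary_mem_lineTh_bary_zero A₃ A₁ A₂ c a b (by positivity) (by positivity)
  · have h := detv_bary_sub A₁ A₂ A₃ (a₂ := 1) (b₂ := 0) (c₂ := 0) (a₃ := 0) (b₃ := 0) (c₃ := 1)
      hs (by norm_num) (by norm_num)
    rw [bary_one_zero_zero, bary_zero_zero_one] at h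
    simpa [h, Matrix.det_fin_three, hb.ne', hs] using hD

end Bary

section Morgan

variable {k : ℕ} (P Q R : ℝ × ℝ)

lemma divpt_two_mul_add_one_self : divpt (2 * k + 1) k P Q = bary P Q R ((k : ℝ) + 1) k 0 := by
  rw [divpt_eq_bary P Q R (by omega)]
  push_cast
  ring_nf

lemma divpt_two_mul_add_one_succ :
    divpt (2 * k + 1) (k + 1) P Q = bary P Q R k ((k : ℝ) + 1) 0 := by
  rw [divpt_eq_bary P Q R (by omega)]
  push_cast
  ring_nf

variable {P Q R} {X : ℝ × ℝ}

lemma eq_bary_of_mem_middle_cevians₁₃ (hD : detv (Q - P) (R - P) ≠ 0)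
    (hX : X ∈ lineTh P (divpt (2 * k + 1) k Q R) ∩ lineTh R (divpt (2 * k + 1) (k + 1) P Q)) :
    X = bary P Q R k ((k : ℝ) + 1) k := by
  rw [divpt_two_mul_add_one_self Q R P, bary_rotate, divpt_two_mul_add_one_succ P Q R] at hX
  exact eq_bary_of_mem_cevians P Q R hD (by positivity) (by positivity) (by positivity) hX

lemma eq_bary_of_mem_middle_cevians₂₃ (hD : detv (Q - P) (R - P) ≠ 0) (hk : 1 ≤ k)
    (hX : X ∈ lineTh Q (divpt (2 * k + 1) k R P) ∩ lineTh R (divpt (2 * k + 1) (k + 1) P Q)) :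
    X = bary P Q R k ((k : ℝ) + 1) ((k : ℝ) + 1) := by
  rw [Set.inter_comm, divpt_two_mul_add_one_self R P Q, divpt_two_mul_add_one_succ P Q R,
    bary_rotate R P Q] at hX
  rw [bary_rotate R P Q]
  refine eq_bary_of_mem_cevians R P Q ?_ (by positivity) (by positivity) (by positivity) hX
  rwa [← detv_rotate]

end Morgan

/-- Morgan's theorem: for odd n = 2k+1, the central hexagon formed by the cevians
to the k-th and (k+1)-th n-division points has area 8/(9n²−1) times the triangle. -/
theorem morgan (k : ℕ) (hk : 1 ≤ k) (n : ℕ) (hn : n = 2 * k + 1)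
    (A1 A2 A3 : ℝ × ℝ) (hind : detv (A2 - A1) (A3 - A1) ≠ 0)
    (I J K L M N : ℝ × ℝ)
    (hI : I ∈ lineTh A1 (divpt n k A2 A3) ∩ lineTh A3 (divpt n (k + 1) A1 A2))
    (hJ : J ∈ lineTh A2 (divpt n k A3 A1) ∩ lineTh A3 (divpt n (k + 1) A1 A2))
    (hK : K ∈ lineTh A2 (divpt n k A3 A1) ∩ lineTh A1 (divpt n (k + 1) A2 A3))
    (hL : L ∈ lineTh A3 (divpt n k A1 A2) ∩ lineTh A1 (divpt n (k + 1) A2 A3))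
    (hM : M ∈ lineTh A2 (divpt n (k + 1) A3 A1) ∩ lineTh A3 (divpt n k A1 A2))
    (hN : N ∈ lineTh A1 (divpt n k A2 A3) ∩ lineTh A2 (divpt n (k + 1) A3 A1)) :
    area3 I J K + area3 I K L + area3 I L M + area3 I M N =
      8 / (9 * (n : ℝ) ^ 2 - 1) * area3 A1 A2 A3 := by
  subst hn
  have hind₂ : detv (A3 - A2) (A1 - A2) ≠ 0 := by rwa [detv_rotate]
  have hind₃ : detv (A1 - A3) (A2 - A3) ≠ 0 := by rwa [← detv_rotate]
  obtain rfl := eq_bary_of_mem_middle_cevians₁₃ hind hI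
  obtain rfl := eq_bary_of_mem_middle_cevians₂₃ hind hk hJ
  obtain rfl := eq_bary_of_mem_middle_cevians₁₃ hind₂ hK
  obtain rfl := eq_bary_of_mem_middle_cevians₂₃ hind₂ hk hL
  obtain rfl := eq_bary_of_mem_middle_cevians₁₃ hind₃ (Set.inter_comm _ _ ▸ hM)
  obtain rfl := eq_bary_of_mem_middle_cevians₂₃ hind₃ hk hN
  rw [bary_rotate A1 A2 A3, bary_rotate A1 A2 A3, ← bary_rotate A3 A1 A2, ← bary_rotate A3 A1 A2]
  rw [area3_bary A1 A2 A3 (by positivity) (by positivity) (by positivity),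
    area3_bary A1 A2 A3 (by positivity) (by positivity) (by positivity),
    area3_bary A1 A2 A3 (by positivity) (by positivity) (by positivity),
    area3_bary A1 A2 A3 (by positivity) (by positivity) (by positivity)]
  simp only [Matrix.det_fin_three, Matrix.of_apply, Matrix.cons_val', Matrix.cons_val_zero,
    Matrix.cons_val_fin_one, Matrix.cons_val_one, Matrix.cons_val]
  rw [abs_of_nonneg, abs_of_nonneg, abs_of_nonneg, abs_of_nonneg]
  · rw [show 9 * ((2 * k + 1 : ℕ) : ℝ) ^ 2 - 1 = 4 * (3 * k + 1) * (3 * k + 2) by push_cast; ring]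
    field_simp
    ring
  all_goals ring_nf; positivity
end

section
/- Let ABCD be a parallelogram in ℝ² and κ, λ, μ, ν > 0. Let K = (B+κC)/(1+κ) on BC, L = (C+λD)/(1+λ) on CD, M = (D+μA)/(1+μ) on DA, N = (A+νB)/(1+ν) on AB. Then the quadrilateral with vertices X = BL∩CM, Y = CM∩DN, Z = DN∩AK, W = AK∩BL has area equal to (1/2)·[(μ/(1+ν) + (1+μ)/λ)(1 + κ/(1+μ) + (κ+1)/(ν(1+μ))) / ((2 + 1/λ − 1/(1+μ))(1 + μ + νμ/(1+ν))(1 + 2κ + (κ+1)/ν)) + ((κ+1)/ν + κ/(1+λ))(1 + 1/λ + κ/(1+μ)) / ((2 + 1/λ − 1/(1+μ))(1 + κ + λκ/(1+λ))(1 + 2κ + (κ+1)/ν))] times the area of ABCD. -/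
lemma detv_smul_add_smul (u v : ℝ × ℝ) (a b c d : ℝ) :
    detv (a • u + b • v) (c • u + d • v) = (a * d - b * c) * detv u v := by
  simp only [detv, Prod.fst_add, Prod.snd_add, Prod.smul_fst, Prod.smul_snd, smul_eq_mul]
  ring

lemma lineTh_inter_subsingleton {P Q R S : ℝ × ℝ} (h : detv (Q - P) (S - R) ≠ 0) :
    (lineTh P Q ∩ lineTh R S).Subsingleton := by
  have cramer : ∀ X ∈ lineTh P Q ∩ lineTh R S,
      X = P + (detv (R - P) (S - R) / detv (Q - P) (S - R)) • (Q - P) := by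
    rintro X ⟨⟨t, rfl⟩, ⟨s, hs⟩⟩
    have h₁ := congrArg Prod.fst hs
    have h₂ := congrArg Prod.snd hs
    simp only [Prod.fst_add, Prod.snd_add, Prod.fst_sub, Prod.snd_sub, Prod.smul_fst,
      Prod.smul_snd, smul_eq_mul] at h₁ h₂
    have ht : detv (R - P) (S - R) = t * detv (Q - P) (S - R) := by
      simp only [detv, Prod.fst_sub, Prod.snd_sub]
      linear_combination (S.1 - R.1) * h₂ - (S.2 - R.2) * h₁
    rw [ht, mul_div_cancel_right₀ _ h]
  intro X hX Y hY
  rw [cramer X hX, cramer Y hY]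

def affineFrame (A u v p : ℝ × ℝ) : ℝ × ℝ := A + p.1 • u + p.2 • v

lemma area3_affineFrame (A u v p q r : ℝ × ℝ) :
    area3 (affineFrame A u v p) (affineFrame A u v q) (affineFrame A u v r) =
      |detv u v| * area3 p q r := by
  have h : detv (affineFrame A u v q - affineFrame A u v p)
      (affineFrame A u v r - affineFrame A u v p) = detv u v * detv (q - p) (r - p) := by
    simp only [affineFrame, detv, Prod.fst_add, Prod.snd_add, Prod.fst_sub, Prod.snd_sub,
      Prod.smul_fst, Prod.smul_snd, smul_eq_mul]
    ring
  rw [area3, area3, h, abs_mul, mul_div_assoc]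

def rotQuarter (p : ℝ × ℝ) : ℝ × ℝ := (1 - p.2, p.1)

lemma affineFrame_rotQuarter {P Q R S : ℝ × ℝ} (h : Q - P = R - S) (p : ℝ × ℝ) :
    affineFrame Q (R - Q) (P - Q) p = affineFrame P (Q - P) (S - P) (rotQuarter p) := by
  have hR : R = Q - P + S := by rw [h, sub_add_cancel]
  subst hR
  simp only [affineFrame, rotQuarter]
  module

structure IsParallelogram (P Q R S : ℝ × ℝ) : Prop where
  sub_eq_sub : Q - P = R - S
  detv_ne_zero : detv (Q - P) (S - P) ≠ 0

noncomputable def cevianMeet (a b : ℝ) : ℝ × ℝ :=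
  ((1 + a) * (1 + b) / ((1 + a) * (1 + b) + a * b), a * (1 + b) / ((1 + a) * (1 + b) + a * b))

namespace IsParallelogram

variable {P Q R S : ℝ × ℝ}

theorem rotate (h : IsParallelogram P Q R S) : IsParallelogram Q R S P where
  sub_eq_sub := by
    rw [← neg_sub Q R, ← neg_sub P S, neg_inj, sub_eq_sub_iff_sub_eq_sub, h.sub_eq_sub]
  detv_ne_zero := by
    have hR : R = Q - P + S := by rw [h.sub_eq_sub, sub_add_cancel]
    convert h.detv_ne_zero using 1
    rw [hR]
    simp only [detv, Prod.fst_add, Prod.snd_add, Prod.fst_sub, Prod.snd_sub]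
    ring

theorem cevian_inter_eq (h : IsParallelogram P Q R S) {a b : ℝ} (ha : 0 < a) (hb : 0 < b)
    {X : ℝ × ℝ} (hX : X ∈ lineTh P ((1 / (1 + a)) • Q + (a / (1 + a)) • R) ∩
      lineTh Q ((1 / (1 + b)) • R + (b / (1 + b)) • S)) :
    X = affineFrame P (Q - P) (S - P) (cevianMeet a b) := by
  obtain ⟨hpar, hind⟩ := h
  obtain ⟨u, rfl⟩ : ∃ u, Q = P + u := ⟨Q - P, (add_sub_cancel P Q).symm⟩
  obtain ⟨v, rfl⟩ : ∃ v, S = P + v := ⟨S - P, (add_sub_cancel P S).symm⟩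
  obtain rfl : R = P + u + v := by
    rw [add_sub_cancel_left] at hpar
    rw [hpar]
    abel
  simp only [add_sub_cancel_left] at hind ⊢
  have hd : (1 + a) * (1 + b) + a * b ≠ 0 := by positivity
  have hK : (1 / (1 + a)) • (P + u) + (a / (1 + a)) • (P + u + v) - P =
      (1 : ℝ) • u + (a / (1 + a)) • v := by
    match_scalars <;> grind
  have hL : (1 / (1 + b)) • (P + u + v) + (b / (1 + b)) • (P + v) - (P + u) =
      (-(b / (1 + b))) • u + (1 : ℝ) • v := by
    match_scalars <;> grind
  refine lineTh_inter_subsingleton ?_ hX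
    ⟨⟨(cevianMeet a b).1, ?_⟩, ⟨(cevianMeet a b).2, ?_⟩⟩
  · rw [hK, hL, detv_smul_add_smul]
    refine mul_ne_zero ?_ hind
    rw [mul_neg, sub_neg_eq_add]
    positivity
  · rw [hK, affineFrame]
    simp only [cevianMeet]
    match_scalars <;> grind
  · rw [hL, affineFrame]
    simp only [cevianMeet]
    match_scalars <;> grind

end IsParallelogram

-- Removes the subtraction from the denominator, so that `field_simp` and `positivity` apply.
lemma two_add_one_div_sub_one_div {l m : ℝ} (hl : l ≠ 0) (hm : 1 + m ≠ 0) :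
    2 + 1 / l - 1 / (1 + m) = (1 + l + 2 * l * m + m) / (l * (1 + m)) := by
  field_simp
  ring

lemma detv_cevianMeet_xyz {k l m n : ℝ} (hk : 0 < k) (hl : 0 < l) (hm : 0 < m) (hn : 0 < n) :
    detv (rotQuarter (rotQuarter (cevianMeet m n)) - rotQuarter (cevianMeet l m))
        (rotQuarter (rotQuarter (rotQuarter (cevianMeet n k))) - rotQuarter (cevianMeet l m)) =
      (m / (1 + n) + (1 + m) / l) * (1 + k / (1 + m) + (k + 1) / (n * (1 + m))) /
        ((2 + 1 / l - 1 / (1 + m)) * (1 + m + n * m / (1 + n)) * (1 + 2 * k + (k + 1) / n)) := by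
  rw [two_add_one_div_sub_one_div hl.ne' (by positivity)]
  simp only [detv, cevianMeet, rotQuarter, Prod.fst_sub, Prod.snd_sub]
  field_simp
  ring

lemma detv_cevianMeet_zwx {k l m n : ℝ} (hk : 0 < k) (hl : 0 < l) (hm : 0 < m) (hn : 0 < n) :
    detv (cevianMeet k l - rotQuarter (rotQuarter (rotQuarter (cevianMeet n k))))
        (rotQuarter (cevianMeet l m) - rotQuarter (rotQuarter (rotQuarter (cevianMeet n k)))) =
      ((k + 1) / n + k / (1 + l)) * (1 + 1 / l + k / (1 + m)) /
        ((2 + 1 / l - 1 / (1 + m)) * (1 + k + l * k / (1 + l)) * (1 + 2 * k + (k + 1) / n)) := by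
  rw [two_add_one_div_sub_one_div hl.ne' (by positivity)]
  simp only [detv, cevianMeet, rotQuarter, Prod.fst_sub, Prod.snd_sub]
  field_simp
  ring

lemma area3_add_area3_cevianMeet {k l m n : ℝ} (hk : 0 < k) (hl : 0 < l) (hm : 0 < m)
    (hn : 0 < n) :
    area3 (rotQuarter (cevianMeet l m)) (rotQuarter (rotQuarter (cevianMeet m n)))
        (rotQuarter (rotQuarter (rotQuarter (cevianMeet n k)))) +
      area3 (rotQuarter (rotQuarter (rotQuarter (cevianMeet n k)))) (cevianMeet k l)
        (rotQuarter (cevianMeet l m)) =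
      (1 / 2) *
        ((m / (1 + n) + (1 + m) / l) * (1 + k / (1 + m) + (k + 1) / (n * (1 + m))) /
            ((2 + 1 / l - 1 / (1 + m)) * (1 + m + n * m / (1 + n)) *
              (1 + 2 * k + (k + 1) / n)) +
          ((k + 1) / n + k / (1 + l)) * (1 + 1 / l + k / (1 + m)) /
            ((2 + 1 / l - 1 / (1 + m)) * (1 + k + l * k / (1 + l)) *
              (1 + 2 * k + (k + 1) / n))) := by
  rw [area3, area3, detv_cevianMeet_xyz hk hl hm hn, detv_cevianMeet_zwx hk hl hm hn,
    two_add_one_div_sub_one_div hl.ne' (by positivity), abs_of_pos (by positivity),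
    abs_of_pos (by positivity)]
  ring

/-- Routh–Steiner theorem for parallelograms with arbitrary ratios κ, λ, μ, ν. -/
theorem parallelogram_routh (A B C D : ℝ × ℝ)
    (hpar : B - A = C - D) (hind : detv (B - A) (D - A) ≠ 0)
    (k l m n : ℝ) (hk : 0 < k) (hl : 0 < l) (hm : 0 < m) (hn : 0 < n)
    (K L M N : ℝ × ℝ)
    (hK : K = (1 / (1 + k)) • B + (k / (1 + k)) • C)
    (hL : L = (1 / (1 + l)) • C + (l / (1 + l)) • D)
    (hM : M = (1 / (1 + m)) • D + (m / (1 + m)) • A)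
    (hN : N = (1 / (1 + n)) • A + (n / (1 + n)) • B)
    (X Y Z W : ℝ × ℝ)
    (hX : X ∈ lineTh B L ∩ lineTh C M)
    (hY : Y ∈ lineTh C M ∩ lineTh D N)
    (hZ : Z ∈ lineTh D N ∩ lineTh A K)
    (hW : W ∈ lineTh A K ∩ lineTh B L) :
    area3 X Y Z + area3 Z W X =
      (1 / 2) *
        ((m / (1 + n) + (1 + m) / l) * (1 + k / (1 + m) + (k + 1) / (n * (1 + m))) /
            ((2 + 1 / l - 1 / (1 + m)) * (1 + m + n * m / (1 + n)) *
              (1 + 2 * k + (k + 1) / n)) +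
          ((k + 1) / n + k / (1 + l)) * (1 + 1 / l + k / (1 + m)) /
            ((2 + 1 / l - 1 / (1 + m)) * (1 + k + l * k / (1 + l)) *
              (1 + 2 * k + (k + 1) / n))) *
        |detv (B - A) (D - A)| := by
  have h₀ : IsParallelogram A B C D := ⟨hpar, hind⟩
  have h₁ := h₀.rotate
  have h₂ := h₁.rotate
  subst hK hL hM hN
  have hW' : W = affineFrame A (B - A) (D - A) (cevianMeet k l) := h₀.cevian_inter_eq hk hl hW
  have hX' : X = affineFrame A (B - A) (D - A) (rotQuarter (cevianMeet l m)) := by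
    rw [h₁.cevian_inter_eq hl hm hX, affineFrame_rotQuarter h₀.sub_eq_sub]
  have hY' : Y = affineFrame A (B - A) (D - A) (rotQuarter (rotQuarter (cevianMeet m n))) := by
    rw [h₂.cevian_inter_eq hm hn hY, affineFrame_rotQuarter h₁.sub_eq_sub,
      affineFrame_rotQuarter h₀.sub_eq_sub]
  have hZ' : Z = affineFrame A (B - A) (D - A)
      (rotQuarter (rotQuarter (rotQuarter (cevianMeet n k)))) := by
    rw [h₂.rotate.cevian_inter_eq hn hk hZ, affineFrame_rotQuarter h₂.sub_eq_sub,
      affineFrame_rotQuarter h₁.sub_eq_sub, affineFrame_rotQuarter h₀.sub_eq_sub]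
  rw [hW', hX', hY', hZ', area3_affineFrame, area3_affineFrame, ← mul_add,
    area3_add_area3_cevianMeet hk hl hm hn]
  ring
end
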